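/- arXiv:2107.01607 — 6 statements merged into one kernel-verified Lean document; each statement's English description precedes it below -/
import Mathlib

section
/- Let A be an A-optimal alignment of maximum length of a 2-sequence s,t, i.e. an alignment minimizing the total score cost_A^γ and, among those, of maximum length L. Then cost_A^γ[A]/L ≤ 2 · d_N^γ(s,t), where d_N^γ(s,t) is the minimum over all alignments B of s,t of cost_A^γ[B]/|B|. -/
/-- Score (cost) of a pairwise alignment: sum of scoring-matrix entries over columns. -/
def costA {α : Type} (γ : Option α → Option α → ℚ)
    (A : List (Option α × Option α)) : ℚ :=
  (A.map fun p => γ p.1 p.2).sum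

/-- Normalized score of a pairwise alignment (0 when the alignment is empty,
    since division by zero is 0 in `ℚ`). -/
def costN {α : Type} (γ : Option α → Option α → ℚ)
    (A : List (Option α × Option α)) : ℚ :=
  costA γ A / (A.length : ℚ)

/-- `A` is an alignment of the 2-sequence `s, t`: removing spaces from the first
    (resp. second) row recovers `s` (resp. `t`) and no column is all spaces. -/
def IsPairAlign {α : Type} (s t : List α) (A : List (Option α × Option α)) : Prop :=
  (A.map Prod.fst).reduceOption = s ∧ (A.map Prod.snd).reduceOption = t ∧
    ∀ p ∈ A, p.1 ≠ none ∨ p.2 ≠ none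

/-- `A` is an alignment of the `k`-sequence `S` of length `L`. -/
def IsAlignment {α : Type} {k : ℕ} (S : Fin k → List α)
    (A : Fin k → List (Option α)) (L : ℕ) : Prop :=
  (∀ i, (A i).length = L) ∧ (∀ i, (A i).reduceOption = S i) ∧
    ∀ j < L, ∃ i, (A i).getD j none ≠ none

/-- The pairwise alignment induced by rows `h` and `i` of a multiple alignment
    (all-space columns removed). -/
def induced {α : Type} {k : ℕ} (A : Fin k → List (Option α)) (h i : Fin k) :
    List (Option α × Option α) :=
  ((A h).zip (A i)).filter fun p => p.1.isSome || p.2.isSome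

/-- The set of ordered pairs `h < i` of indices. -/
def pairs (k : ℕ) : Finset (Fin k × Fin k) :=
  Finset.univ.filter fun p => p.1 < p.2

/-- SP-score of a multiple alignment. -/
def costSP {α : Type} {k : ℕ} (γ : Option α → Option α → ℚ)
    (A : Fin k → List (Option α)) : ℚ :=
  ∑ p ∈ pairs k, costA γ (induced A p.1 p.2)

/-- Normalization criterion 1: SP-score divided by the alignment length. -/
def costSPN1 {α : Type} {k : ℕ} (γ : Option α → Option α → ℚ)
    (A : Fin k → List (Option α)) (L : ℕ) : ℚ :=
  costSP γ A / (L : ℚ)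

/-- Normalization criterion 2: sum of normalized pairwise scores. -/
def costSPN2 {α : Type} {k : ℕ} (γ : Option α → Option α → ℚ)
    (A : Fin k → List (Option α)) : ℚ :=
  ∑ p ∈ pairs k, costN γ (induced A p.1 p.2)

/-- Normalization criterion 3: SP-score divided by the sum of induced lengths. -/
def costSPN3 {α : Type} {k : ℕ} (γ : Option α → Option α → ℚ)
    (A : Fin k → List (Option α)) : ℚ :=
  costSP γ A / (∑ p ∈ pairs k, ((induced A p.1 p.2).length : ℚ))

/-- The class `M^W` of scoring matrices. -/
def MW {α : Type} (γ : Option α → Option α → ℚ) : Prop :=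
  (∀ a : α, γ (some a) none = γ none (some a) ∧ 0 < γ (some a) none) ∧
  (∀ a b : α, (a ≠ b → 0 < γ (some a) (some b)) ∧ γ (some a) (some a) = 0) ∧
  (∀ a b : α, γ (some a) (some b) < γ (some a) none + γ none (some b) →
    γ (some a) (some b) = γ (some b) (some a)) ∧
  (∀ a b : α, γ (some a) none ≤ γ (some a) (some b) + γ (some b) none) ∧
  (∀ a b c : α, min (γ (some a) (some c)) (γ (some a) none + γ none (some c)) ≤
    γ (some a) (some b) + γ (some b) (some c))

/-- The class `M^N`. -/
def MN {α : Type} (γ : Option α → Option α → ℚ) : Prop :=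
  MW γ ∧ ∀ a b : α, γ (some a) none ≤ 2 * γ (some b) none


lemma costA_nonneg {α : Type} (γ : Option α → Option α → ℚ)
    (hγ : ∀ a b, 0 ≤ γ a b) (B : List (Option α × Option α)) :
    0 ≤ costA γ B := by
  apply List.sum_nonneg
  intro x hx
  simp only [List.mem_map] at hx
  obtain ⟨p, _, rfl⟩ := hx
  exact hγ _ _

lemma len_le_sum {α : Type} (B : List (Option α × Option α))
    (h : ∀ p ∈ B, p.1 ≠ none ∨ p.2 ≠ none) :
    B.length ≤ (B.map Prod.fst).reduceOption.length +
      (B.map Prod.snd).reduceOption.length := by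
  induction B with
  | nil => simp
  | cons p rest ih =>
    have hp := h p List.mem_cons_self
    have hrest := ih (fun q hq => h q (List.mem_cons_of_mem _ hq))
    simp only [List.map_cons, List.length_cons]
    rcases hp with h1 | h2
    · obtain ⟨a, ha⟩ := Option.ne_none_iff_exists'.mp h1
      rw [ha]
      cases hb : p.2 with
      | none => simp [List.reduceOption_cons_of_some, hb]; omega
      | some b => simp [List.reduceOption_cons_of_some, hb]; omega
    · obtain ⟨b, hb⟩ := Option.ne_none_iff_exists'.mp h2
      rw [hb]
      cases ha : p.1 with
      | none => simp [List.reduceOption_cons_of_some, ha]; omega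
      | some a => simp [List.reduceOption_cons_of_some, ha]; omega

/-- if `A` is an `A`-optimal alignment of `s, t` of maximum length
    among the optimal ones, then `costA[A]/|A| ≤ 2 · costN[B]` for every
    alignment `B` of `s, t`; i.e. the heuristic value is at most twice the
    normalized edit distance `d_N^γ(s,t)`. -/
theorem heuristic_two_approx {α : Type} (γ : Option α → Option α → ℚ)
    (hγ : ∀ a b, 0 ≤ γ a b) (s t : List α)
    (A : List (Option α × Option α)) (hA : IsPairAlign s t A)
    (hopt : ∀ B, IsPairAlign s t B → costA γ A ≤ costA γ B)
    (hmax : ∀ B, IsPairAlign s t B → costA γ B = costA γ A → B.length ≤ A.length) :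
    ∀ B, IsPairAlign s t B →
      costA γ A / (A.length : ℚ) ≤ 2 * (costA γ B / (B.length : ℚ)) := by
  intro B hB
  have hcB : 0 ≤ costA γ B := costA_nonneg γ hγ B
  have hcA : 0 ≤ costA γ A := costA_nonneg γ hγ A
  have hle : costA γ A ≤ costA γ B := hopt B hB
  have hsA : s.length ≤ A.length := by
    have := List.reduceOption_length_le (A.map Prod.fst)
    rw [hA.1] at this
    simpa using this
  have htA : t.length ≤ A.length := by
    have := List.reduceOption_length_le (A.map Prod.snd)
    rw [hA.2.1] at this
    simpa using this
  have hBst : B.length ≤ s.length + t.length := by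
    have := len_le_sum B hB.2.2
    rw [hB.1, hB.2.1] at this
    exact this
  have hB2A : B.length ≤ 2 * A.length := by omega
  rcases Nat.eq_zero_or_pos A.length with hA0 | hA0
  · -- A empty, then s = t = [] and B = []
    have hB0 : B.length = 0 := by omega
    have : costA γ A = 0 := by
      have : A = [] := List.length_eq_zero_iff.mp hA0
      simp [this, costA]
    simp [this, hA0]
    positivity
  · have hBpos : 0 < B.length := by
      by_contra hc
      have hB0 : B = [] := List.length_eq_zero_iff.mp (by omega)
      subst hB0
      have hs : s = [] := by simpa using hB.1.symm
      have ht : t = [] := by simpa using hB.2.1.symm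
      have hA0' : A.length = 0 := by
        cases A with
        | nil => rfl
        | cons p rest =>
          exfalso
          have h1 : (p.1 :: rest.map Prod.fst).reduceOption = s := by
            simpa using hA.1
          have h2 : (p.2 :: rest.map Prod.snd).reduceOption = t := by
            simpa using hA.2.1
          rcases hA.2.2 p List.mem_cons_self with hp | hp
          · obtain ⟨a, ha⟩ := Option.ne_none_iff_exists'.mp hp
            rw [ha, hs] at h1
            simp [List.reduceOption_cons_of_some] at h1
          · obtain ⟨b, hb⟩ := Option.ne_none_iff_exists'.mp hp
            rw [hb, ht] at h2
            simp [List.reduceOption_cons_of_some] at h2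
      omega
    have hAq : (0:ℚ) < (A.length : ℚ) := by exact_mod_cast hA0
    have hBq : (0:ℚ) < (B.length : ℚ) := by exact_mod_cast hBpos
    have h2A : (B.length : ℚ) ≤ 2 * (A.length : ℚ) := by exact_mod_cast hB2A
    rw [div_le_iff₀ hAq]
    have hd : 0 ≤ costA γ B / ↑B.length := div_nonneg hcB hBq.le
    have heq : costA γ B / ↑B.length * ↑B.length = costA γ B :=
      div_mul_cancel₀ _ (ne_of_gt hBq)
    nlinarith [mul_le_mul_of_nonneg_left h2A hd]
end

section
/- Let A be an alignment of S with induced SP-cost c = cost_SP^γ[A], and A^L its canonical extension, with N = C(k,2)·M, L = N·k²·M·G where G ≥ 1 and c is an integer. If cost_SPN1^{γ^σ}[A^L] ≤ C/L for an integer C < k²MG, then cost_SP^γ[A] ≤ C. (The key inequality is cost_SP^γ[A] = cost_SP^{γ^σ}[A^L] ≤ (N+L)·cost_SPN1^{γ^σ}[A^L] ≤ NC/L + C < 1 + C.) -/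
/-- Extended alphabet with a fresh symbol `σ` (`Sum.inr ()`). -/
abbrev SigExt (α : Type) : Type := α ⊕ Unit

/-- Scoring matrix `γ^σ` extending `γ` by scoring the new symbol `σ` with `G`
    against anything else and `0` against itself. -/
def extMat {α : Type} (γ : Option α → Option α → ℚ) (G : ℚ) :
    Option (SigExt α) → Option (SigExt α) → ℚ
  | some (Sum.inr _), some (Sum.inr _) => 0
  | some (Sum.inr _), _ => G
  | _, some (Sum.inr _) => G
  | none, none => γ none none
  | none, some (Sum.inl a) => γ none (some a)
  | some (Sum.inl a), none => γ (some a) none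
  | some (Sum.inl a), some (Sum.inl b) => γ (some a) (some b)

/-- Canonical extension `A^L`: append `L` all-`σ` columns to the alignment `A`. -/
def extendA {α : Type} {k : ℕ} (A : Fin k → List (Option α)) (L : ℕ) :
    Fin k → List (Option (SigExt α)) :=
  fun i => (A i).map (Option.map Sum.inl) ++ List.replicate L (some (Sum.inr ()))
section Aux

lemma extMat_inl {α : Type} (γ : Option α → Option α → ℚ) (G : ℚ) (a b : Option α) :
    extMat γ G (Option.map Sum.inl a) (Option.map Sum.inl b) = γ a b := by
  cases a <;> cases b <;> rfl

lemma zip_replicate' {α β : Type} (n : ℕ) (x : α) (y : β) :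
    (List.replicate n x).zip (List.replicate n y) = List.replicate n (x, y) := by
  induction n with
  | zero => simp
  | succ n ih => simp [List.replicate_succ, ih]

lemma induced_extend {α : Type} {k : ℕ} (A : Fin k → List (Option α)) (L : ℕ)
    (h i : Fin k) (hlen : (A h).length = (A i).length) :
    induced (extendA A L) h i =
      (induced A h i).map (Prod.map (Option.map Sum.inl) (Option.map Sum.inl)) ++
        List.replicate L (some (Sum.inr ()), some (Sum.inr ())) := by
  unfold induced extendA
  rw [List.zip_append (by simpa using hlen), List.filter_append]
  congr 1
  · rw [List.zip_map, List.filter_map]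
    congr 1
    apply List.filter_congr
    intro p _
    cases p with
    | mk a b => cases a <;> cases b <;> rfl
  · rw [zip_replicate']
    simp

lemma costA_extend {α : Type} {k : ℕ} (γ : Option α → Option α → ℚ) (G : ℚ)
    (A : Fin k → List (Option α)) (L : ℕ) (h i : Fin k)
    (hlen : (A h).length = (A i).length) :
    costA (extMat γ G) (induced (extendA A L) h i) = costA γ (induced A h i) := by
  rw [induced_extend A L h i hlen]
  unfold costA
  rw [List.map_append, List.sum_append, List.map_map]
  have h1 : (List.replicate L ((some (Sum.inr ()) : Option (SigExt α)),
      (some (Sum.inr ()) : Option (SigExt α)))).map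
      (fun p => extMat γ G p.1 p.2) = List.replicate L (0 : ℚ) := by
    simp [extMat]
  rw [h1]
  simp only [List.sum_replicate, smul_zero, add_zero]
  congr 1
  refine List.map_congr_left fun p _ => ?_
  exact extMat_inl γ G p.1 p.2

lemma costSP_extend {α : Type} {k : ℕ} (γ : Option α → Option α → ℚ) (G : ℚ)
    (A : Fin k → List (Option α)) (L ℓ : ℕ) (hlen : ∀ i, (A i).length = ℓ) :
    costSP (extMat γ G) (extendA A L) = costSP γ A := by
  unfold costSP
  refine Finset.sum_congr rfl fun p _ => ?_
  exact costA_extend γ G A L p.1 p.2 (by rw [hlen, hlen])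

lemma pairs_card (k : ℕ) : (pairs k).card = k.choose 2 := by
  unfold pairs
  rw [Finset.card_filter, Fintype.sum_prod_type, Finset.sum_comm]
  have h1 : ∀ j : Fin k, (∑ i : Fin k, if i < j then 1 else 0) = (j : ℕ) := by
    intro j
    rw [← Finset.card_filter]
    have : Finset.univ.filter (fun i : Fin k => i < j) = Finset.Iio j := by
      ext x; simp
    rw [this, Fin.card_Iio]
  simp only [h1]
  rw [Fin.sum_univ_eq_sum_range (fun j => j) k, Finset.sum_range_id,
    Nat.choose_two_right]

lemma getD_sum_eq {α : Type} (l : List (Option α)) :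
    (∑ j ∈ Finset.range l.length, if (l.getD j none).isSome then 1 else 0) =
      l.reduceOption.length := by
  induction l with
  | nil => simp
  | cons a l ih =>
    rw [List.length_cons, Finset.sum_range_succ']
    cases a with
    | none => simpa using ih
    | some a => simpa using ih

lemma length_le_of_alignment {α : Type} {k : ℕ} (S : Fin k → List α)
    (A : Fin k → List (Option α)) (ℓ M : ℕ) (hA : IsAlignment S A ℓ)
    (hM : ∀ i, (S i).length ≤ M) : ℓ ≤ k * M := by
  obtain ⟨hlen, hred, hcol⟩ := hA
  have step1 : ℓ ≤ ∑ j ∈ Finset.range ℓ, ∑ i : Fin k,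
      (if ((A i).getD j none).isSome then 1 else 0) := by
    calc ℓ = ∑ _j ∈ Finset.range ℓ, 1 := by simp
    _ ≤ _ := by
      refine Finset.sum_le_sum fun j hj => ?_
      obtain ⟨i, hi⟩ := hcol j (Finset.mem_range.mp hj)
      rw [← Option.isSome_iff_ne_none] at hi
      refine le_trans ?_ (Finset.single_le_sum (f := fun i : Fin k =>
          if ((A i).getD j none).isSome then 1 else 0)
          (fun _ _ => Nat.zero_le _) (Finset.mem_univ i))
      simp only [List.getD_eq_getElem?_getD] at hi
      simp [hi]
  rw [Finset.sum_comm] at step1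
  have step2 : ∀ i : Fin k, (∑ j ∈ Finset.range ℓ,
      (if ((A i).getD j none).isSome then 1 else 0)) = (S i).length := by
    intro i
    rw [← hlen i, getD_sum_eq, hred i]
  rw [Finset.sum_congr rfl fun i _ => step2 i] at step1
  calc ℓ ≤ ∑ i : Fin k, (S i).length := step1
  _ ≤ ∑ _i : Fin k, M := Finset.sum_le_sum fun i _ => hM i
  _ = k * M := by simp [mul_comm]

lemma costA_le_bound {α : Type} (γ : Option α → Option α → ℚ) (G : ℚ)
    (hGmax : ∀ a b, γ a b ≤ G) (l : List (Option α × Option α)) :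
    costA γ l ≤ (l.length : ℚ) * G := by
  unfold costA
  have := List.sum_le_card_nsmul (l.map fun p => γ p.1 p.2) G (by
    intro x hx
    obtain ⟨p, _, rfl⟩ := List.mem_map.mp hx
    exact hGmax p.1 p.2)
  simpa [nsmul_eq_mul] using this

end Aux

/-- with `N = C(k,2)·M`, `L = N·k²·M·G`, integer SP-cost and an
    integer `C < k²·M·G`, if the canonical extension satisfies
    `costSPN1^{γ^σ}[A^L] ≤ C/L` then `costSP^γ[A] ≤ C`. -/
theorem nmsa_to_msa_converse {α : Type} {k : ℕ} (hk : 2 ≤ k)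
    (γ : Option α → Option α → ℚ) (G : ℕ) (hG1 : 1 ≤ G)
    (hsym : ∀ a b, γ a b = γ b a) (hzero : ∀ a b, γ a b = 0 ↔ a = b)
    (hpos : ∀ a b, 0 ≤ γ a b) (hGmax : ∀ a b, γ a b ≤ (G : ℚ))
    (S : Fin k → List α) (M : ℕ) (hM1 : 1 ≤ M) (hM : ∀ i, (S i).length ≤ M)
    (N L : ℕ) (hN : N = k.choose 2 * M) (hL : L = N * k ^ 2 * M * G)
    (A : Fin k → List (Option α)) (ℓ : ℕ) (hA : IsAlignment S A ℓ)
    (z : ℤ) (hint : costSP γ A = (z : ℚ))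
    (C : ℤ) (hCu : (C : ℚ) < (k : ℚ) ^ 2 * M * G)
    (h1 : costSPN1 (extMat γ (G : ℚ)) (extendA A L) (ℓ + L) ≤ (C : ℚ) / (L : ℚ)) :
    costSP γ A ≤ (C : ℚ) := by
  by_contra hzc
  push_neg at hzc
  rw [hint] at hzc
  have hCz : (C : ℚ) + 1 ≤ (z : ℚ) := by
    exact_mod_cast Int.add_one_le_of_lt (by exact_mod_cast hzc)
  have hP : 1 ≤ k.choose 2 := Nat.choose_pos hk
  have hLpos : 0 < L := by
    have hk0 : 0 < k := by omega
    rw [hL, hN]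
    exact Nat.mul_pos (Nat.mul_pos (Nat.mul_pos (Nat.mul_pos hP hM1) (pow_pos hk0 2)) hM1) hG1
  have hLq : (0:ℚ) < (L:ℚ) := by exact_mod_cast hLpos
  have hsumq : (0:ℚ) < ((ℓ + L : ℕ) : ℚ) := by
    exact_mod_cast Nat.lt_of_lt_of_le hLpos (Nat.le_add_left L ℓ)
  have heq : costSP (extMat γ (G:ℚ)) (extendA A L) = (z : ℚ) := by
    rw [costSP_extend γ (G:ℚ) A L ℓ hA.1, hint]
  rw [costSPN1, heq, div_le_div_iff₀ hsumq hLq] at h1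
  have hlkM : ℓ ≤ k * M := length_le_of_alignment S A ℓ M hA hM
  have hzb : (z : ℚ) ≤ (k.choose 2 : ℚ) * ((ℓ:ℚ) * (G:ℚ)) := by
    rw [← hint]
    unfold costSP
    calc ∑ p ∈ pairs k, costA γ (induced A p.1 p.2)
        ≤ ∑ _p ∈ pairs k, (ℓ:ℚ) * (G:ℚ) := by
          refine Finset.sum_le_sum fun p _ => ?_
          refine le_trans (costA_le_bound γ (G:ℚ) hGmax _) ?_
          have hlen : (induced A p.1 p.2).length ≤ ℓ := by
            unfold induced
            refine le_trans (List.length_filter_le _ _) ?_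
            rw [List.length_zip, hA.1, hA.1, min_self]
          have hG0 : (0:ℚ) ≤ (G:ℚ) := by positivity
          exact mul_le_mul_of_nonneg_right (by exact_mod_cast hlen) hG0
      _ = (k.choose 2 : ℚ) * ((ℓ:ℚ) * (G:ℚ)) := by
          rw [Finset.sum_const, pairs_card, nsmul_eq_mul]
  have hLcast : (L : ℚ) = (k.choose 2 : ℚ) * M * (k:ℚ)^2 * M * G := by
    rw [hL, hN]; push_cast; ring
  have hlq : (ℓ:ℚ) ≤ (k:ℚ) * M := by exact_mod_cast hlkM
  have hl0 : (0:ℚ) ≤ (ℓ:ℚ) := by positivity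
  have hPq : (1:ℚ) ≤ (k.choose 2 : ℚ) := by exact_mod_cast hP
  have hGq : (1:ℚ) ≤ (G:ℚ) := by exact_mod_cast hG1
  have hLCl : (L:ℚ) ≤ (C:ℚ) * (ℓ:ℚ) := by
    push_cast at h1
    nlinarith [h1, hCz, hLq]
  have hlpos : (0:ℚ) < (ℓ:ℚ) := by
    rcases lt_or_eq_of_le hl0 with h | h
    · exact h
    · exfalso; rw [← h] at hLCl; simp at hLCl; linarith
  have hC1 : (C:ℚ) ≤ (k.choose 2 : ℚ) * (ℓ:ℚ) * (G:ℚ) - 1 := by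
    nlinarith [hCz, hzb]
  have h2 : (C:ℚ) * ℓ ≤ ((k.choose 2 : ℚ) * ℓ * G - 1) * ℓ :=
    mul_le_mul_of_nonneg_right hC1 hl0
  have hsq : (ℓ:ℚ) * ℓ ≤ ((k:ℚ) * M) * ((k:ℚ) * M) :=
    mul_le_mul hlq hlq hl0 (by positivity)
  have h3 : (k.choose 2 : ℚ) * (G:ℚ) * ((ℓ:ℚ) * ℓ) ≤
      (k.choose 2 : ℚ) * (G:ℚ) * (((k:ℚ) * M) * ((k:ℚ) * M)) :=
    mul_le_mul_of_nonneg_left hsq (by positivity)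
  linarith [hLCl, h2, h3, hlpos, hLcast.le, hLcast.ge]
end

section
/- Given a k-sequence S, if A is an alignment of S, b ∈ {0,1}^k with b ≤ n⃗ (the length vector of S) defines the last column of A (i.e., A(|A|) = b·S(n⃗)), then A restricted to its first |A|−1 columns is an alignment of the prefix S(1:n⃗−b), and consequently the SP-edit distance satisfies the recurrence D_SP^γ(S) = min over nonzero b ∈ {0,1}^k, b ≤ n⃗, of D_SP^γ(S(1:n⃗−b)) + cost_SP^γ[b·S(n⃗)], with D_SP^γ(∅) = 0. -/
section SPrecAux
variable {α : Type}

lemma costA_append' (γ : Option α → Option α → ℚ) (A B : List (Option α × Option α)) :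
    costA γ (A ++ B) = costA γ A + costA γ B := by simp [costA]

lemma reduceOption_concat' (l : List (Option α)) (x : Option α) :
    (l ++ [x]).reduceOption = l.reduceOption ++ x.toList := by
  cases x <;> simp [List.reduceOption_append]

lemma filter_zip_concat' (u v : List (Option α)) (x y : Option α) (h : u.length = v.length) :
    ((u ++ [x]).zip (v ++ [y])).filter (fun p => p.1.isSome || p.2.isSome)
      = ((u.zip v).filter fun p => p.1.isSome || p.2.isSome)
        ++ (if x.isSome || y.isSome then [(x, y)] else []) := by
  rw [List.zip_append h, List.filter_append]
  congr 1
  cases x <;> cases y <;> simp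

lemma costSP_concat' (γ : Option α → Option α → ℚ) (hnn : γ none none = 0) {k : ℕ}
    (A' : Fin k → List (Option α)) (L : ℕ) (hlen : ∀ i, (A' i).length = L)
    (col : Fin k → Option α) :
    costSP γ (fun i => A' i ++ [col i])
      = costSP γ A' + ∑ p ∈ pairs k, γ (col p.1) (col p.2) := by
  rw [costSP, costSP, ← Finset.sum_add_distrib]
  refine Finset.sum_congr rfl fun p _ => ?_
  simp only [induced]
  rw [filter_zip_concat' _ _ _ _ (by rw [hlen, hlen]), costA_append']
  cases hx : col p.1 <;> cases hy : col p.2 <;> simp [costA, hnn]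

lemma drop_alignment' {k : ℕ} (S : Fin k → List α) (A : Fin k → List (Option α)) (L : ℕ)
    (b : Fin k → Bool) (hA : IsAlignment S A L) (hL : 1 ≤ L)
    (hlast : ∀ i, (A i).getLast? = some (if b i then (S i).getLast? else none)) :
    IsAlignment (fun i => if b i then (S i).dropLast else S i)
      (fun i => (A i).dropLast) (L - 1) := by
  obtain ⟨hlen, hred, hcol⟩ := hA
  have hne : ∀ i, A i ≠ [] := by
    intro i h
    have := hlen i
    rw [h] at this
    simp at this
    omega
  refine ⟨fun i => by simp [hlen], fun i => ?_, fun j hj => ?_⟩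
  · have hdec : (A i).dropLast ++ [(A i).getLast (hne i)] = A i :=
      List.dropLast_append_getLast _
    have hlast' : (A i).getLast (hne i) = (if b i then (S i).getLast? else none) := by
      have h2 := List.getLast?_eq_getLast (hne i)
      rw [hlast i] at h2
      exact (Option.some.inj h2).symm
    have hsplit : (A i).dropLast.reduceOption
        ++ (if b i then (S i).getLast? else none).toList = S i := by
      rw [← hlast', ← reduceOption_concat', hdec, hred]
    by_cases hb : b i
    · simp only [hb, if_true] at hsplit ⊢
      cases hg : (S i).getLast? with
      | none =>
        have hSnil : S i = [] := List.getLast?_eq_none_iff.mp hg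
        rw [hg] at hsplit
        simp [hSnil] at hsplit ⊢
        exact hsplit
      | some a =>
        rw [hg] at hsplit
        simp only [Option.toList_some] at hsplit
        rw [← hsplit, List.dropLast_concat]
    · simp only [hb, if_false] at hsplit ⊢
      simpa using hsplit
  · have hj' : j < L := lt_of_lt_of_le hj (Nat.sub_le _ _)
    obtain ⟨i, hi⟩ := hcol j hj'
    refine ⟨i, ?_⟩
    have heq : (A i).dropLast.getD j none = (A i).getD j none := by
      conv_rhs => rw [← List.dropLast_append_getLast (hne i)]
      rw [List.getD_append _ _ _ _ (by simp [hlen]; omega)]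
    rw [heq]; exact hi

end SPrecAux

section SPrecAux2
variable {α : Type}

lemma extend_alignment' {k : ℕ} (S : Fin k → List α) (b : Fin k → Bool)
    (hb : ∃ i, b i = true) (hbS : ∀ i, b i = true → S i ≠ [])
    (A' : Fin k → List (Option α)) (L : ℕ)
    (hA' : IsAlignment (fun i => if b i then (S i).dropLast else S i) A' L) :
    IsAlignment S (fun i => A' i ++ [if b i then (S i).getLast? else none]) (L + 1) := by
  obtain ⟨hlen, hred, hcol⟩ := hA'
  refine ⟨fun i => by simp [hlen], fun i => ?_, fun j hj => ?_⟩
  · rw [reduceOption_concat']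
    have hri := hred i
    simp only at hri
    by_cases hb' : b i
    · have hne := hbS i hb'
      simp only [hb', if_true] at hri ⊢
      rw [hri, List.getLast?_eq_getLast hne]
      simpa using List.dropLast_append_getLast hne
    · simp only [hb', if_false] at hri ⊢
      rw [hri]; simp
  · rcases Nat.lt_or_ge j L with h | h
    · obtain ⟨i, hi⟩ := hcol j h
      exact ⟨i, by rw [List.getD_append _ _ _ _ (by rw [hlen]; exact h)]; exact hi⟩
    · have hjL : j = L := by omega
      obtain ⟨i, hi⟩ := hb
      refine ⟨i, ?_⟩
      have hgd : ((A' i ++ [if b i then (S i).getLast? else none]).getD j none)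
          = (S i).getLast? := by
        subst hjL
        rw [← hlen i]
        simp [List.getD, hi]
      rw [hgd, List.getLast?_eq_getLast (hbS i hi)]
      simp

end SPrecAux2

/-- if `b` defines the last column of an alignment `A` of `S`,
    then dropping that column yields an alignment of the prefix `S(1:n⃗-b)`;
    consequently the optimal SP-score `d` satisfies the dynamic-programming
    recurrence over the nonzero bit vectors `b`. -/
theorem sp_recurrence {α : Type} {k : ℕ}
    (γ : Option α → Option α → ℚ) (hnn : γ none none = 0)
    (d : (Fin k → List α) → ℚ)
    (hd : ∀ S : Fin k → List α,
      IsLeast {c : ℚ | ∃ (A : Fin k → List (Option α)) (L : ℕ),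
        IsAlignment S A L ∧ costSP γ A = c} (d S))
    (S : Fin k → List α) (hS : ∃ i, S i ≠ []) :
    (∀ (A : Fin k → List (Option α)) (L : ℕ) (b : Fin k → Bool),
      IsAlignment S A L → 1 ≤ L →
      (∀ i, b i = true → S i ≠ []) →
      (∀ i, (A i).getLast? = some (if b i then (S i).getLast? else none)) →
      IsAlignment (fun i => if b i then (S i).dropLast else S i)
        (fun i => (A i).dropLast) (L - 1)) ∧
    IsLeast {x : ℚ | ∃ b : Fin k → Bool, (∃ i, b i = true) ∧
        (∀ i, b i = true → S i ≠ []) ∧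
        x = d (fun i => if b i then (S i).dropLast else S i) +
          ∑ p ∈ pairs k,
            γ (if b p.1 then (S p.1).getLast? else none)
              (if b p.2 then (S p.2).getLast? else none)}
      (d S) := by
  refine ⟨fun A L b hA hL _ hlast => drop_alignment' S A L b hA hL hlast, ?_⟩
  have hlb : ∀ x ∈ {x : ℚ | ∃ b : Fin k → Bool, (∃ i, b i = true) ∧
      (∀ i, b i = true → S i ≠ []) ∧
      x = d (fun i => if b i then (S i).dropLast else S i) +
        ∑ p ∈ pairs k,
          γ (if b p.1 then (S p.1).getLast? else none)
            (if b p.2 then (S p.2).getLast? else none)}, d S ≤ x := by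
    rintro x ⟨b, hbnz, hbS, rfl⟩
    obtain ⟨A', L', hA', hcost'⟩ := (hd (fun i => if b i then (S i).dropLast else S i)).1
    have hAlign := extend_alignment' S b hbnz hbS A' L' hA'
    have hle := (hd S).2 ⟨_, L' + 1, hAlign, rfl⟩
    rwa [costSP_concat' γ hnn A' L' hA'.1, hcost'] at hle
  refine ⟨?_, hlb⟩
  obtain ⟨A, L, hA, hcost⟩ := (hd S).1
  obtain ⟨hlen, hred, hcol⟩ := hA
  have hL : 1 ≤ L := by
    obtain ⟨i0, hi0⟩ := hS
    by_contra h
    have hL0 : L = 0 := by omega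
    have hA0 : A i0 = [] := List.eq_nil_of_length_eq_zero (by rw [hlen i0, hL0])
    apply hi0; rw [← hred i0, hA0]; rfl
  have hne : ∀ i, A i ≠ [] := by
    intro i h
    have := hlen i; rw [h] at this; simp at this; omega
  set last : Fin k → Option α := fun i => (A i).getD (L - 1) none with hlastdef
  have hlastA : ∀ i, (A i).getLast? = some (last i) := by
    intro i
    have h1 : L - 1 < (A i).length := by rw [hlen i]; omega
    rw [List.getLast?_eq_getElem?, hlen i, List.getElem?_eq_getElem (by rw [hlen]; omega)]
    simp only [hlastdef]
    rw [List.getD_eq_getElem _ _ h1]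
  have hdec : ∀ i, (A i).dropLast ++ [last i] = A i := by
    intro i
    have h2 := List.getLast?_eq_getLast (hne i)
    rw [hlastA i] at h2
    rw [Option.some.inj h2]
    exact List.dropLast_append_getLast _
  set b : Fin k → Bool := fun i => (last i).isSome with hbdef
  have hbtrue : ∀ i, b i = true → (S i).getLast? = last i ∧ S i ≠ [] := by
    intro i hbi
    obtain ⟨a, ha⟩ := Option.isSome_iff_exists.mp hbi
    have hsi : (A i).dropLast.reduceOption ++ [a] = S i := by
      have h3 := reduceOption_concat' ((A i).dropLast) (last i)
      rw [hdec i, hred i, ha] at h3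
      simpa using h3.symm
    constructor
    · rw [← hsi, ha, List.getLast?_concat]
    · intro h0; rw [h0] at hsi; simp at hsi
  have hbS' : ∀ i, b i = true → S i ≠ [] := fun i h => (hbtrue i h).2
  have hcoleq : ∀ i, (if b i then (S i).getLast? else none) = last i := by
    intro i
    by_cases hbi : b i
    · simp only [hbi, if_true]; exact (hbtrue i hbi).1
    · simp only [hbi, if_false]
      exact (Option.not_isSome_iff_eq_none.mp (by simpa [hbdef] using hbi)).symm
  have hbnz : ∃ i, b i = true := by
    obtain ⟨i, hi⟩ := hcol (L - 1) (by omega)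
    exact ⟨i, by simpa [hbdef, hlastdef] using Option.ne_none_iff_isSome.mp hi⟩
  have hdrop := drop_alignment' S A L b ⟨hlen, hred, hcol⟩ hL
    (fun i => by rw [hlastA i, hcoleq i])
  have h1 : d (fun i => if b i then (S i).dropLast else S i)
      ≤ costSP γ (fun i => (A i).dropLast) :=
    (hd (fun i => if b i then (S i).dropLast else S i)).2 ⟨_, L - 1, hdrop, rfl⟩
  have h2 : costSP γ A = costSP γ (fun i => (A i).dropLast)
      + ∑ p ∈ pairs k, γ (last p.1) (last p.2) := by
    conv_lhs => rw [show A = fun i => (A i).dropLast ++ [last i] from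
      funext fun i => (hdec i).symm]
    exact costSP_concat' γ hnn _ (L - 1) (fun i => by simp [hlen]) last
  have hsumeq : ∑ p ∈ pairs k,
      γ (if b p.1 then (S p.1).getLast? else none)
        (if b p.2 then (S p.2).getLast? else none)
      = ∑ p ∈ pairs k, γ (last p.1) (last p.2) :=
    Finset.sum_congr rfl fun p _ => by rw [hcoleq, hcoleq]
  have hge : d (fun i => if b i then (S i).dropLast else S i) +
      ∑ p ∈ pairs k,
        γ (if b p.1 then (S p.1).getLast? else none)
          (if b p.2 then (S p.2).getLast? else none) ≤ d S := by
    rw [hsumeq, ← hcost, h2]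
    exact add_le_add h1 le_rfl
  have hle := hlb _ ⟨b, hbnz, hbS', rfl⟩
  exact ⟨b, hbnz, hbS', le_antisymm hle hge⟩
end

section
/- The three normalization criteria for multiple sequence alignment are pairwise inequivalent: there exist a scoring matrix γ on Σ = {a,b,c} and a 3-sequence whose optimal alignment under criterion V1 (SP-score divided by alignment length) is not optimal under criteria V2 or V3; and there exist a scoring matrix δ and a 3-sequence whose optimal alignment under V3 (SP-score divided by sum of induced pairwise lengths) is not optimal under V2 (sum of normalized pairwise scores). -/
section Helpers
variable {α : Type}

lemma repl_getD (m j : ℕ) : (List.replicate m (none : Option α)).getD j none = none := by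
  induction m generalizing j with
  | zero => simp
  | succ m ih =>
    cases j with
    | zero => simp [List.replicate]
    | succ j => simpa [List.replicate] using ih j

lemma shape_getD (x : α) : ∀ (n j m : ℕ),
    ((List.replicate n none ++ some x :: List.replicate m none)).getD j none ≠ none → j = n := by
  intro n
  induction n with
  | zero =>
    intro j m h
    cases j with
    | zero => rfl
    | succ j => simp [repl_getD] at h
  | succ n ih =>
    intro j m h
    cases j with
    | zero => simp [List.replicate] at h
    | succ j => simpa using ih j m (by simpa [List.replicate] using h)

lemma all_none : ∀ (t : List (Option α)), t.reduceOption = [] → t = List.replicate t.length none := by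
  intro t
  induction t with
  | nil => simp
  | cons o t ih =>
    intro h
    cases o with
    | none =>
      rw [List.length_cons, List.replicate_succ]
      exact congrArg (List.cons none) (ih (by simpa [List.reduceOption] using h))
    | some a => simp [List.reduceOption] at h

lemma single_some (x : α) : ∀ (ℓ : List (Option α)), ℓ.reduceOption = [x] →
    ∃ n, n < ℓ.length ∧ ℓ = List.replicate n none ++ some x :: List.replicate (ℓ.length - n - 1) none := by
  intro ℓ
  induction ℓ with
  | nil => simp [List.reduceOption]
  | cons o t ih =>
    intro h
    cases o with
    | none =>
      obtain ⟨n, hn, ht⟩ := ih (by simpa [List.reduceOption] using h)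
      exact ⟨n + 1, by simpa using Nat.succ_lt_succ hn,
        by simp only [List.replicate_succ, List.cons_append, List.length_cons,
          Nat.succ_sub_succ]; rw [← ht]⟩
    | some a =>
      have h' : a = x ∧ t.reduceOption = [] := by
        simpa [List.reduceOption] using h
      exact ⟨0, by simp, by simp [h'.1, Nat.succ_sub_one]; exact all_none t h'.2⟩

end Helpers

lemma struct (B : Fin 3 → List (Option (Fin 3))) (L : ℕ)
    (h : IsAlignment (fun i : Fin 3 => [i]) B L) :
    ∃ n0 n1 n2 : ℕ, n0 < L ∧ n1 < L ∧ n2 < L ∧ L ≤ 3 ∧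
      B 0 = List.replicate n0 none ++ some 0 :: List.replicate (L - n0 - 1) none ∧
      B 1 = List.replicate n1 none ++ some 1 :: List.replicate (L - n1 - 1) none ∧
      B 2 = List.replicate n2 none ++ some 2 :: List.replicate (L - n2 - 1) none ∧
      (∀ j < L, n0 = j ∨ n1 = j ∨ n2 = j) := by
  obtain ⟨hlen, hred, hcol⟩ := h
  obtain ⟨n0, hn0, hB0⟩ := single_some _ (B 0) (hred 0)
  obtain ⟨n1, hn1, hB1⟩ := single_some _ (B 1) (hred 1)
  obtain ⟨n2, hn2, hB2⟩ := single_some _ (B 2) (hred 2)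
  rw [hlen 0] at hn0 hB0
  rw [hlen 1] at hn1 hB1
  rw [hlen 2] at hn2 hB2
  have hcov : ∀ j < L, n0 = j ∨ n1 = j ∨ n2 = j := by
    intro j hj
    obtain ⟨i, hi⟩ := hcol j hj
    fin_cases i
    · have hi' : (B 0).getD j none ≠ none := hi
      rw [hB0] at hi'; exact Or.inl (shape_getD _ _ _ _ hi').symm
    · have hi' : (B 1).getD j none ≠ none := hi
      rw [hB1] at hi'; exact Or.inr (Or.inl (shape_getD _ _ _ _ hi').symm)
    · have hi' : (B 2).getD j none ≠ none := hi
      rw [hB2] at hi'; exact Or.inr (Or.inr (shape_getD _ _ _ _ hi').symm)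
  have hL : L ≤ 3 := by
    by_contra hc
    have c0 := hcov 0 (by omega)
    have c1 := hcov 1 (by omega)
    have c2 := hcov 2 (by omega)
    have c3 := hcov 3 (by omega)
    omega
  exact ⟨n0, n1, n2, hn0, hn1, hn2, hL, hB0, hB1, hB2, hcov⟩

def gam : Option (Fin 3) → Option (Fin 3) → ℚ := fun o p =>
  match o, p with
  | some a, some b => if a = b then 0 else 9
  | none, none => 0
  | _, _ => 10

def del : Option (Fin 3) → Option (Fin 3) → ℚ := fun o p =>
  match o, p with
  | some a, some b =>
      if a = b then 0
      else if (a = 0 ∧ b = 1) ∨ (a = 1 ∧ b = 0) then 11/2 else 49/10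
  | some a, none => if a = 2 then 9/2 else 11/2
  | none, some b => if b = 2 then 9/2 else 11/2
  | none, none => 0

lemma pairs3 : pairs 3 = {(0,1),(0,2),(1,2)} := by decide

lemma sum_pairs3 (f : Fin 3 × Fin 3 → ℚ) :
    ∑ p ∈ pairs 3, f p = f (0,1) + f (0,2) + f (1,2) := by
  rw [pairs3, Finset.sum_insert (by decide), Finset.sum_insert (by decide),
    Finset.sum_singleton]
  ring

lemma repl_two : List.replicate 2 (none : Option (Fin 3)) = [none, none] := rfl

lemma f01 : ((0:Fin 3) = 1) ↔ False := by decide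
lemma f02 : ((0:Fin 3) = 2) ↔ False := by decide
lemma f10 : ((1:Fin 3) = 0) ↔ False := by decide
lemma f12 : ((1:Fin 3) = 2) ↔ False := by decide
lemma f20 : ((2:Fin 3) = 0) ↔ False := by decide
lemma f21 : ((2:Fin 3) = 1) ↔ False := by decide

/-- the three normalization criteria are pairwise inequivalent:
    some 3-sequence has a `V1`-optimal alignment that is optimal for neither
    `V2` nor `V3`, and some 3-sequence has a `V3`-optimal alignment that is
    not `V2`-optimal. -/
theorem criteria_inequivalent :
    (∃ (γ : Option (Fin 3) → Option (Fin 3) → ℚ) (S : Fin 3 → List (Fin 3))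
        (A : Fin 3 → List (Option (Fin 3))) (L : ℕ),
      IsAlignment S A L ∧
      (∀ (B : Fin 3 → List (Option (Fin 3))) (L' : ℕ),
        IsAlignment S B L' → costSPN1 γ A L ≤ costSPN1 γ B L') ∧
      (∃ (B : Fin 3 → List (Option (Fin 3))) (L' : ℕ),
        IsAlignment S B L' ∧ costSPN2 γ B < costSPN2 γ A) ∧
      (∃ (B : Fin 3 → List (Option (Fin 3))) (L' : ℕ),
        IsAlignment S B L' ∧ costSPN3 γ B < costSPN3 γ A)) ∧
    (∃ (δ : Option (Fin 3) → Option (Fin 3) → ℚ) (S : Fin 3 → List (Fin 3))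
        (A : Fin 3 → List (Option (Fin 3))) (L : ℕ),
      IsAlignment S A L ∧
      (∀ (B : Fin 3 → List (Option (Fin 3))) (L' : ℕ),
        IsAlignment S B L' → costSPN3 δ A ≤ costSPN3 δ B) ∧
      (∃ (B : Fin 3 → List (Option (Fin 3))) (L' : ℕ),
        IsAlignment S B L' ∧ costSPN2 δ B < costSPN2 δ A)) := by
  constructor
  · refine ⟨gam, (fun i => [i]),
      ![[some 0, none, none], [none, some 1, none], [none, none, some 2]], 3,
      ⟨by decide, by decide, by decide⟩, ?_, ?_, ?_⟩
    · intro B L' hB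
      obtain ⟨n0, n1, n2, h0, h1, h2, hL3, hB0, hB1, hB2, hcov⟩ := struct B L' hB
      have hBf : B = ![B 0, B 1, B 2] := by funext i; fin_cases i <;> rfl
      rw [hB0, hB1, hB2] at hBf
      rw [hBf]
      have hL1 : 1 ≤ L' := by omega
      interval_cases L'
      · interval_cases n0 <;> interval_cases n1 <;> interval_cases n2 <;>
          · simp only [costSPN1, costSP, sum_pairs3]
            norm_num [costA, induced, gam, f01, f02, f10, f12, f20, f21, Matrix.cons_val_two, Matrix.vecHead, Matrix.vecTail, List.replicate_one, repl_two]
      · have c0 := hcov 0 (by omega); have c1 := hcov 1 (by omega)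
        interval_cases n0 <;> interval_cases n1 <;> interval_cases n2 <;>
          first
          | omega
          | (simp only [costSPN1, costSP, sum_pairs3]
             norm_num [costA, induced, gam, f01, f02, f10, f12, f20, f21, Matrix.cons_val_two, Matrix.vecHead, Matrix.vecTail, List.replicate_one, repl_two])
      · have c0 := hcov 0 (by omega); have c1 := hcov 1 (by omega)
        have c2 := hcov 2 (by omega)
        interval_cases n0 <;> interval_cases n1 <;> interval_cases n2 <;>
          first
          | omega
          | (simp only [costSPN1, costSP, sum_pairs3]
             norm_num [costA, induced, gam, f01, f02, f10, f12, f20, f21, Matrix.cons_val_two, Matrix.vecHead, Matrix.vecTail, List.replicate_one, repl_two])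
    · refine ⟨![[some 0], [some 1], [some 2]], 1, ⟨by decide, by decide, by decide⟩, ?_⟩
      simp only [costSPN2, costN, sum_pairs3]
      norm_num [costA, induced, gam, f01, f02, f10, f12, f20, f21, Matrix.cons_val_two, Matrix.vecHead, Matrix.vecTail]
    · refine ⟨![[some 0], [some 1], [some 2]], 1, ⟨by decide, by decide, by decide⟩, ?_⟩
      simp only [costSPN3, costSP, sum_pairs3]
      norm_num [costA, induced, gam, f01, f02, f10, f12, f20, f21, Matrix.cons_val_two, Matrix.vecHead, Matrix.vecTail]
  · refine ⟨del, (fun i => [i]),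
      ![[some 0, none], [some 1, none], [none, some 2]], 2,
      ⟨by decide, by decide, by decide⟩, ?_, ?_⟩
    · intro B L' hB
      obtain ⟨n0, n1, n2, h0, h1, h2, hL3, hB0, hB1, hB2, hcov⟩ := struct B L' hB
      have hBf : B = ![B 0, B 1, B 2] := by funext i; fin_cases i <;> rfl
      rw [hB0, hB1, hB2] at hBf
      rw [hBf]
      have hL1 : 1 ≤ L' := by omega
      interval_cases L'
      · interval_cases n0 <;> interval_cases n1 <;> interval_cases n2 <;>
          · simp only [costSPN3, costSP, sum_pairs3]
            norm_num [costA, induced, del, f01, f02, f10, f12, f20, f21, Matrix.cons_val_two, Matrix.vecHead, Matrix.vecTail, List.replicate_one, repl_two]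
      · have c0 := hcov 0 (by omega); have c1 := hcov 1 (by omega)
        interval_cases n0 <;> interval_cases n1 <;> interval_cases n2 <;>
          first
          | omega
          | (simp only [costSPN3, costSP, sum_pairs3]
             norm_num [costA, induced, del, f01, f02, f10, f12, f20, f21, Matrix.cons_val_two, Matrix.vecHead, Matrix.vecTail, List.replicate_one, repl_two])
      · have c0 := hcov 0 (by omega); have c1 := hcov 1 (by omega)
        have c2 := hcov 2 (by omega)
        interval_cases n0 <;> interval_cases n1 <;> interval_cases n2 <;>
          first
          | omega
          | (simp only [costSPN3, costSP, sum_pairs3]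
             norm_num [costA, induced, del, f01, f02, f10, f12, f20, f21, Matrix.cons_val_two, Matrix.vecHead, Matrix.vecTail, List.replicate_one, repl_two])
    · refine ⟨![[some 0], [some 1], [some 2]], 1, ⟨by decide, by decide, by decide⟩, ?_⟩
      simp only [costSPN2, costN, sum_pairs3]
      norm_num [costA, induced, del, f01, f02, f10, f12, f20, f21, Matrix.cons_val_two, Matrix.vecHead, Matrix.vecTail]
end

section
/- Let S = s_1,...,s_k be a k-sequence and suppose the pairwise optimal cost opt is symmetric and satisfies the triangle inequality on Σ*. Then the optimal star score satisfies optStar(S) ≤ (2/k) · OPT(S), where OPT(S) is the minimum over all alignments A of S of Σ_{h<i} v[A_{{h,i}}] and optStar(S) = min_c Σ_{h≠c} opt(s_h, s_c). -/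
lemma filterMap_fst_filter {α : Type} (l : List (Option α × Option α)) :
    List.filterMap Prod.fst (l.filter fun p => p.1.isSome || p.2.isSome)
      = List.filterMap Prod.fst l := by
  induction l with
  | nil => simp
  | cons p tl ih =>
    obtain ⟨x, y⟩ := p
    cases x <;> cases y <;> simp [List.filter_cons, List.filterMap_cons, ih]

lemma filterMap_snd_filter {α : Type} (l : List (Option α × Option α)) :
    List.filterMap Prod.snd (l.filter fun p => p.1.isSome || p.2.isSome)
      = List.filterMap Prod.snd l := by
  induction l with
  | nil => simp
  | cons p tl ih =>
    obtain ⟨x, y⟩ := p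
    cases x <;> cases y <;> simp [List.filter_cons, List.filterMap_cons, ih]

lemma red_map {α β : Type} (f : α → Option β) (l : List α) :
    (l.map f).reduceOption = l.filterMap f := by
  rw [List.reduceOption, List.filterMap_map]
  rfl

lemma induced_isPairAlign {α : Type} {k : ℕ} {S : Fin k → List α}
    {A : Fin k → List (Option α)} {L : ℕ} (hA : IsAlignment S A L) (h i : Fin k) :
    IsPairAlign (S h) (S i) (induced A h i) := by
  obtain ⟨hlen, hred, -⟩ := hA
  have hzf : ((A h).zip (A i)).map Prod.fst = A h :=
    List.map_fst_zip (by rw [hlen, hlen])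
  have hzs : ((A h).zip (A i)).map Prod.snd = A i :=
    List.map_snd_zip (by rw [hlen, hlen])
  refine ⟨?_, ?_, ?_⟩
  · rw [induced, red_map, filterMap_fst_filter, ← red_map, hzf, hred]
  · rw [induced, red_map, filterMap_snd_filter, ← red_map, hzs, hred]
  · intro p hp
    rw [induced, List.mem_filter] at hp
    have := hp.2
    simp only [Bool.or_eq_true, Option.isSome_iff_exists] at this
    rcases this with ⟨a, ha⟩ | ⟨a, ha⟩
    · exact Or.inl (by simp [ha])
    · exact Or.inr (by simp [ha])

/-- star lemma: if the pairwise optimal cost `opt` is a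
    symmetric lower bound for the criterion `v` satisfying the triangle
    inequality, then the optimal star score is at most `(2/k)` times the
    SP-value of any alignment of `S`, hence at most `(2/k)·OPT(S)`. -/
theorem star_lemma {α : Type} {k : ℕ}
    (hne : (Finset.univ : Finset (Fin k)).Nonempty)
    (v : List (Option α × Option α) → ℚ) (opt : List α → List α → ℚ)
    (hlb : ∀ s t B, IsPairAlign s t B → opt s t ≤ v B)
    (hsym : ∀ s t, opt s t = opt t s)
    (htri : ∀ s t u, opt s u ≤ opt s t + opt t u)
    (S : Fin k → List α) (A : Fin k → List (Option α)) (L : ℕ)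
    (hA : IsAlignment S A L) :
    (Finset.univ.inf' hne fun c =>
        ∑ h ∈ Finset.univ.filter (fun h => h ≠ c), opt (S h) (S c)) ≤
      (2 / (k : ℚ)) * ∑ p ∈ pairs k, v (induced A p.1 p.2) := by
  have hk0 : 0 < k := by
    rcases hne with ⟨c, -⟩; exact c.pos
  have hkQ : (0 : ℚ) < (k : ℚ) := by exact_mod_cast hk0
  set m := (Finset.univ.inf' hne fun c =>
      ∑ h ∈ Finset.univ.filter (fun h => h ≠ c), opt (S h) (S c)) with hm
  set T := ∑ p ∈ pairs k, v (induced A p.1 p.2) with hT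
  have hopt : ∀ h i : Fin k, opt (S h) (S i) ≤ v (induced A h i) := fun h i =>
    hlb _ _ _ (induced_isPairAlign hA h i)
  -- double counting
  have key : ∑ c : Fin k, ∑ h ∈ Finset.univ.filter (fun h => h ≠ c), opt (S h) (S c)
      = ∑ p ∈ pairs k, (opt (S p.1) (S p.2) + opt (S p.2) (S p.1)) := by
    set f : Fin k → Fin k → ℚ := fun a b => opt (S a) (S b) with hf
    calc ∑ c : Fin k, ∑ h ∈ Finset.univ.filter (fun h => h ≠ c), opt (S h) (S c)
        = ∑ c : Fin k, ∑ h : Fin k,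
            ((if h < c then f h c else 0) + (if c < h then f h c else 0)) := by
          refine Finset.sum_congr rfl fun c _ => ?_
          rw [Finset.sum_filter]
          refine Finset.sum_congr rfl fun h _ => ?_
          rcases lt_trichotomy h c with hlt | heq | hgt
          · simp [hf, hlt, ne_of_lt hlt, not_lt_of_gt hlt]
          · simp [heq]
          · simp [hf, hgt, (ne_of_lt hgt).symm, not_lt_of_gt hgt]
      _ = (∑ c : Fin k, ∑ h : Fin k, (if h < c then f h c else 0))
            + ∑ c : Fin k, ∑ h : Fin k, (if c < h then f h c else 0) := by
          rw [← Finset.sum_add_distrib]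
          exact Finset.sum_congr rfl fun c _ => Finset.sum_add_distrib
      _ = (∑ a : Fin k, ∑ b : Fin k, (if a < b then f a b else 0))
            + ∑ a : Fin k, ∑ b : Fin k, (if a < b then f b a else 0) := by
          rw [add_right_cancel_iff.mpr rfl]
          congr 1
          exact Finset.sum_comm
      _ = ∑ a : Fin k, ∑ b : Fin k, (if a < b then f a b + f b a else 0) := by
          rw [← Finset.sum_add_distrib]
          refine Finset.sum_congr rfl fun a _ => ?_
          rw [← Finset.sum_add_distrib]
          refine Finset.sum_congr rfl fun b _ => ?_
          split <;> ring
      _ = ∑ p ∈ pairs k, (opt (S p.1) (S p.2) + opt (S p.2) (S p.1)) := by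
          rw [pairs, Finset.sum_filter, Fintype.sum_prod_type]
  have step1 : (k : ℚ) * m ≤ 2 * T := by
    have h1 : (k : ℚ) * m ≤ ∑ c : Fin k,
        ∑ h ∈ Finset.univ.filter (fun h => h ≠ c), opt (S h) (S c) := by
      have : (k : ℚ) * m = ∑ _c : Fin k, m := by
        simp [Finset.sum_const, Finset.card_univ, mul_comm]
      rw [this]
      exact Finset.sum_le_sum fun c _ =>
        Finset.inf'_le _ (Finset.mem_univ c)
    have h2 : ∑ p ∈ pairs k, (opt (S p.1) (S p.2) + opt (S p.2) (S p.1)) ≤ 2 * T := by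
      rw [hT, Finset.mul_sum]
      refine Finset.sum_le_sum fun p _ => ?_
      have := hopt p.1 p.2
      have h' := hopt p.2 p.1
      have hs : opt (S p.2) (S p.1) = opt (S p.1) (S p.2) := hsym _ _
      rw [hs]
      linarith
    calc (k : ℚ) * m ≤ _ := h1
      _ = _ := key
      _ ≤ 2 * T := h2
  rw [div_mul_eq_mul_div, le_div_iff₀ hkQ]
  linarith [step1]
end

section
/- Let γ ∈ M^W, let X_h = [s',t'] be a pairwise alignment and Y_h its splitting obtained by replacing every splittable column j (a column with s'(j) ≠ -, t'(j) ≠ -, and min{γ(t'(j),-), γ(s'(j),-)} ≤ γ(s'(j),t'(j))) by the two columns [s'(j), -] and [-, t'(j)]. Then cost_A^γ[Y_h] ≤ 3 · cost_A^γ[X_h], and moreover cost_N^γ[Y_h] ≤ 3 · cost_N^γ[X_h]. -/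
/-- Split every splittable column `[a, b]` of a pairwise alignment into the two
    columns `[a, -]` and `[-, b]`. -/
def splitCols {α : Type} [DecidableEq α] (γ : Option α → Option α → ℚ)
    (A : List (Option α × Option α)) : List (Option α × Option α) :=
  A.flatMap fun p =>
    if p.1 ≠ none ∧ p.2 ≠ none ∧ min (γ p.2 none) (γ p.1 none) ≤ γ p.1 p.2 then
      [(p.1, none), (none, p.2)]
    else [p]

lemma col_nonneg {α : Type} (γ : Option α → Option α → ℚ) (hMW : MW γ)
    (p : Option α × Option α) (hp : p.1 ≠ none ∨ p.2 ≠ none) : 0 ≤ γ p.1 p.2 := by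
  obtain ⟨h1, h2, _, _, _⟩ := hMW
  obtain ⟨a | a, b | b⟩ := p
  · simp at hp
  · exact le_of_lt ((h1 b).1 ▸ (h1 b).2)
  · exact le_of_lt (h1 a).2
  · by_cases hab : a = b
    · subst hab; exact le_of_eq ((h2 a a).2).symm
    · exact le_of_lt ((h2 a b).1 hab)

lemma col_split {α : Type} (γ : Option α → Option α → ℚ) (hMW : MW γ) (a b : α)
    (h : min (γ (some b) none) (γ (some a) none) ≤ γ (some a) (some b)) :
    γ (some a) none + γ none (some b) ≤ 3 * γ (some a) (some b) := by
  obtain ⟨h1, h2, h3, h4, h5⟩ := hMW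
  have hb : γ none (some b) = γ (some b) none := ((h1 b).1).symm
  rw [hb]
  have ha0 : 0 < γ (some a) none := (h1 a).2
  have hb0 : 0 < γ (some b) none := (h1 b).2
  rcases min_le_iff.mp h with hmb | hma
  · have := h4 a b
    linarith
  · by_cases hlt : γ (some a) (some b) < γ (some a) none + γ none (some b)
    · have hsym := h3 a b hlt
      have := h4 b a
      linarith
    · rw [hb] at hlt
      linarith

lemma split_key {α : Type} [DecidableEq α] (γ : Option α → Option α → ℚ) (hMW : MW γ)
    (B : List (Option α × Option α)) (hB : ∀ p ∈ B, p.1 ≠ none ∨ p.2 ≠ none) :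
    costA γ (splitCols γ B) ≤ 3 * costA γ B ∧ 0 ≤ costA γ B ∧
      B.length ≤ (splitCols γ B).length := by
  induction B with
  | nil => simp [costA, splitCols]
  | cons p B ih =>
    have hp := hB p (List.mem_cons_self ..)
    obtain ⟨ih1, ih2, ih3⟩ := ih (fun q hq => hB q (List.mem_cons_of_mem _ hq))
    have hpn : 0 ≤ γ p.1 p.2 := col_nonneg γ hMW p hp
    have hsplit : splitCols γ (p :: B) =
        (if p.1 ≠ none ∧ p.2 ≠ none ∧ min (γ p.2 none) (γ p.1 none) ≤ γ p.1 p.2 then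
          [(p.1, none), (none, p.2)] else [p]) ++ splitCols γ B := by
      simp [splitCols]
    by_cases hc : p.1 ≠ none ∧ p.2 ≠ none ∧ min (γ p.2 none) (γ p.1 none) ≤ γ p.1 p.2
    · rw [hsplit, if_pos hc]
      obtain ⟨hc1, hc2, hc3⟩ := hc
      obtain ⟨a, ha⟩ := Option.ne_none_iff_exists'.mp hc1
      obtain ⟨b, hbb⟩ := Option.ne_none_iff_exists'.mp hc2
      have hcol : γ p.1 none + γ none p.2 ≤ 3 * γ p.1 p.2 := by
        rw [ha, hbb]; exact col_split γ hMW a b (by rw [ha, hbb] at hc3; exact hc3)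
      constructor
      · simp only [costA, List.map_append, List.sum_append, List.map_cons, List.sum_cons,
          List.map_nil, List.sum_nil, List.map, List.length, List.append_eq, List.nil_append]
        simp only [costA] at ih1
        linarith
      constructor
      · simp only [costA, List.map_cons, List.sum_cons]
        simp only [costA] at ih2
        linarith
      · simp only [List.length_append, List.length_cons]
        omega
    · rw [hsplit, if_neg hc]
      constructor
      · simp only [costA, List.map_append, List.sum_append, List.map_cons, List.sum_cons,
          List.map_nil, List.sum_nil]
        simp only [costA] at ih1
        linarith
      constructor
      · simp only [costA, List.map_cons, List.sum_cons]
        simp only [costA] at ih2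
        linarith
      · simp only [List.length_append, List.length_cons]
        omega

/-- splitting the splittable columns of a pairwise alignment of
    `s, t` at most triples its `costA` and its `costN` when `γ ∈ M^W`. -/
theorem splitting_triples {α : Type} [DecidableEq α]
    (γ : Option α → Option α → ℚ) (hMW : MW γ)
    (s t : List α) (A : List (Option α × Option α)) (hA : IsPairAlign s t A) :
    costA γ (splitCols γ A) ≤ 3 * costA γ A ∧
    costN γ (splitCols γ A) ≤ 3 * costN γ A := by
  obtain ⟨_, _, hcols⟩ := hA
  obtain ⟨k1, k2, k3⟩ := split_key γ hMW A hcols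
  refine ⟨k1, ?_⟩
  rcases List.eq_nil_or_concat A with rfl | hne
  · simp [costN, costA, splitCols]
  · have hlen : 0 < A.length := by
      obtain ⟨L, x, rfl⟩ := hne; simp
    have hlenQ : (0 : ℚ) < (A.length : ℚ) := by exact_mod_cast hlen
    have hlenQ2 : ((A.length : ℚ)) ≤ ((splitCols γ A).length : ℚ) := by exact_mod_cast k3
    unfold costN
    rw [show (3 : ℚ) * (costA γ A / (A.length : ℚ)) = 3 * costA γ A / (A.length : ℚ) by ring]
    exact div_le_div₀ (by linarith) k1 hlenQ hlenQ2
end
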